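/- There exists a constant C>0 such that for all b,d,e∈ℝ, all k₁,k₂∈ℤ and all (ξ₁,ξ₂,ξ₃)∈ℝ³, the oscillatory integral satisfies |∫_{π/4}^{3π/4} exp(−2πi[ 2^{k₁}ξ₁cosθ + 2^{k₂}ξ₂sinθ + ((b·2^{2k₁}−d·2^{2k₂})cos2θ + e·2^{k₁+k₂}sin2θ)ξ₃ ]) dθ| ≤ C · min{ |(b·2^{2k₁}−d·2^{2k₂})ξ₃|^{−1/4}, |e·2^{k₁+k₂}ξ₃|^{−1/4} }, where a quantity |t|^{−1/4} with t=0 is interpreted as +∞ in the minimum. -/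

import Mathlib

open MeasureTheory Real
open scoped ENNReal NNReal
open Set intervalIntegral Polynomial
open scoped Classical

noncomputable section

/-- The `L^p(μ)` norm of an `ℝ≥0∞`-valued function (essential sup when `p = ∞`). -/
def lpNormE {α : Type*} [MeasurableSpace α] (g : α → ℝ≥0∞) (p : ℝ≥0∞)
    (μ : Measure α) : ℝ≥0∞ :=
  if p = ∞ then essSup g μ else (∫⁻ x, g x ^ p.toReal ∂μ) ^ (1 / p.toReal)

/-- `e^{2πit}` for real `t`. -/
def expi (t : ℝ) : ℂ := Complex.exp (2 * Real.pi * Complex.I * (t : ℂ))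

end

open Set intervalIntegral Polynomial
open scoped Classical

noncomputable section




/-- oscillatory integral -/
def osc (f : ℝ → ℝ) (a b : ℝ) : ℂ := ∫ t in a..b, Complex.exp (Complex.I * (f t : ℂ))

lemma osc_integrand_norm (f : ℝ → ℝ) (t : ℝ) : ‖Complex.exp (Complex.I * (f t : ℂ))‖ = 1 := by
  rw [Complex.norm_exp]
  simp

lemma osc_cont (f : ℝ → ℝ) (hf : Continuous f) :
    Continuous (fun t => Complex.exp (Complex.I * (f t : ℂ))) := by
  fun_prop

lemma osc_trivial (f : ℝ → ℝ) {a b : ℝ} (hab : a ≤ b) : ‖osc f a b‖ ≤ b - a := by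
  have h := intervalIntegral.norm_integral_le_of_norm_le_const
    (C := 1) (f := fun t => Complex.exp (Complex.I * (f t : ℂ))) (a := a) (b := b)
    (fun x _ => le_of_eq (osc_integrand_norm f x))
  simpa [osc, abs_of_nonneg (sub_nonneg.2 hab)] using h

lemma osc_neg_norm (f : ℝ → ℝ) (a b : ℝ) : ‖osc (fun t => -f t) a b‖ = ‖osc f a b‖ := by
  have h : ∀ t : ℝ, Complex.exp (Complex.I * ((-f t : ℝ) : ℂ))
      = (starRingEnd ℂ) (Complex.exp (Complex.I * (f t : ℂ))) := by
    intro t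
    rw [← Complex.exp_conj]
    congr 1
    simp [map_mul, Complex.conj_I, Complex.conj_ofReal]
  have : osc (fun t => -f t) a b = (starRingEnd ℂ) (osc f a b) := by
    simp only [osc, h]
    simp only [intervalIntegral, ← integral_conj, map_sub]
  rw [this, RCLike.norm_conj]

/-- sign dichotomy for a continuous nonvanishing function on an interval -/
lemma sign_dichotomy (g : ℝ → ℝ) (hg : Continuous g) {a b : ℝ}
    (h : ∀ t ∈ Icc a b, g t ≠ 0) :
    (∀ t ∈ Icc a b, 0 < g t) ∨ (∀ t ∈ Icc a b, g t < 0) := by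
  by_contra hc
  push_neg at hc
  obtain ⟨⟨x, hx, hgx⟩, ⟨y, hy, hgy⟩⟩ := hc
  have hgx' : g x ≤ 0 := hgx
  have hgy' : 0 ≤ g y := hgy
  have : (0 : ℝ) ∈ Set.uIcc (g x) (g y) := by
    rw [Set.mem_uIcc]; left; exact ⟨hgx', hgy'⟩
  obtain ⟨c, hc1, hc2⟩ := intermediate_value_uIcc (hg.continuousOn : ContinuousOn g (uIcc x y)) this
  exact h c (Set.uIcc_subset_Icc hx hy hc1) hc2

/-- quantitative mean value inequality -/
lemma strong_gain (g g' : ℝ → ℝ) (hg : ∀ t, HasDerivAt g (g' t) t) {a b lam : ℝ}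
    (h : ∀ t ∈ Icc a b, lam ≤ g' t) {x y : ℝ} (hx : x ∈ Icc a b) (hy : y ∈ Icc a b)
    (hxy : x ≤ y) : lam * (y - x) ≤ g y - g x := by
  rcases eq_or_lt_of_le hxy with rfl | hlt
  · simp
  · have hcont : ContinuousOn g (Icc x y) :=
      (continuous_iff_continuousAt.2 fun t => (hg t).continuousAt).continuousOn
    obtain ⟨c, hc, hceq⟩ := exists_hasDerivAt_eq_slope g g' hlt hcont (fun t _ => hg t)
    have hc' : c ∈ Icc a b := ⟨le_trans hx.1 (le_of_lt hc.1), le_trans (le_of_lt hc.2) hy.2⟩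
    have := h c hc'
    rw [hceq] at this
    have hpos : (0:ℝ) < y - x := sub_pos.2 hlt
    calc lam * (y - x) ≤ (g y - g x) / (y - x) * (y - x) := by
          exact mul_le_mul_of_nonneg_right this (le_of_lt hpos)
      _ = g y - g x := by field_simp


/-- van der Corput, first derivative version with monotone phase derivative -/
lemma vdc1 (f f' f'' : ℝ → ℝ)
    (hd1 : ∀ t, HasDerivAt f (f' t) t)
    (hd2 : ∀ t, HasDerivAt f' (f'' t) t)
    (hc2 : Continuous f'')
    {a b lam : ℝ} (hab : a ≤ b) (hlam : 0 < lam)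
    (h1 : ∀ t ∈ Icc a b, lam ≤ |f' t|)
    (h2 : (∀ t ∈ Icc a b, 0 ≤ f'' t) ∨ (∀ t ∈ Icc a b, f'' t ≤ 0)) :
    ‖osc f a b‖ ≤ 4 / lam := by
  have huIcc : Set.uIcc a b = Icc a b := Set.uIcc_of_le hab
  have hne : ∀ t ∈ Icc a b, f' t ≠ 0 := by
    intro t ht h0
    have := h1 t ht; rw [h0, abs_zero] at this; linarith
  have hcf' : Continuous f' := continuous_iff_continuousAt.2 fun t => (hd2 t).continuousAt
  set u : ℝ → ℂ := fun t => -Complex.I * (((f' t)⁻¹ : ℝ) : ℂ) with hu_def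
  set u' : ℝ → ℂ := fun t => Complex.I * ((f'' t / (f' t) ^ 2 : ℝ) : ℂ) with hu'_def
  set v : ℝ → ℂ := fun t => Complex.exp (Complex.I * (f t : ℂ)) with hv_def
  set v' : ℝ → ℂ := fun t => Complex.exp (Complex.I * (f t : ℂ)) * (Complex.I * (f' t : ℂ)) with hv'_def
  have hneC : ∀ t ∈ Set.uIcc a b, (Complex.I * (f' t : ℂ)) ≠ 0 := by
    intro t ht
    exact mul_ne_zero Complex.I_ne_zero (by exact_mod_cast hne t (huIcc ▸ ht))
  have hcf : Continuous f := continuous_iff_continuousAt.2 fun t => (hd1 t).continuousAt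
  have hu : ∀ x ∈ Set.uIcc a b, HasDerivAt u (u' x) x := by
    intro x hx
    have hg : HasDerivAt (fun t => (f' t)⁻¹) (-(f'' x) / (f' x) ^ 2) x :=
      (hd2 x).inv (hne x (huIcc ▸ hx))
    have hder := (hg.ofReal_comp).const_mul (-Complex.I)
    have heq : (-Complex.I) * ((-(f'' x) / (f' x) ^ 2 : ℝ) : ℂ)
        = Complex.I * ((f'' x / (f' x) ^ 2 : ℝ) : ℂ) := by push_cast; ring
    simp only [hu_def, hu'_def]
    rw [← heq]
    exact hder
  have hv : ∀ x ∈ Set.uIcc a b, HasDerivAt v (v' x) x := by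
    intro x hx
    exact ((hd1 x).ofReal_comp.const_mul Complex.I).cexp
  have hu'cont : ContinuousOn u' (Set.uIcc a b) := by
    have hreal : ContinuousOn (fun x => f'' x / (f' x) ^ 2) (Set.uIcc a b) := by
      apply ContinuousOn.div
      · fun_prop
      · fun_prop
      · intro x hx; exact pow_ne_zero _ (hne x (huIcc ▸ hx))
    exact continuousOn_const.mul (Complex.continuous_ofReal.comp_continuousOn hreal)
  have hu'int : IntervalIntegrable u' volume a b := hu'cont.intervalIntegrable
  have hv'int : IntervalIntegrable v' volume a b := by
    apply Continuous.intervalIntegrable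
    exact (Complex.continuous_exp.comp
      (continuous_const.mul (Complex.continuous_ofReal.comp hcf))).mul
      (continuous_const.mul (Complex.continuous_ofReal.comp hcf'))
  have hibp := integral_mul_deriv_eq_deriv_mul hu hv hu'int hv'int
  have hstepA : osc f a b = ∫ x in a..b, u x * v' x := by
    apply intervalIntegral.integral_congr
    intro x hx
    have h0 := hneC x hx
    have h0' : ((f' x : ℝ) : ℂ) ≠ 0 := by
      exact_mod_cast hne x (huIcc ▸ hx)
    simp only [hu_def, hv'_def]
    push_cast
    field_simp
    ring_nf
    simp [Complex.I_sq]
  have hnorm_u : ∀ t ∈ Icc a b, ‖u t‖ ≤ 1 / lam := by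
    intro t ht
    have : ‖u t‖ = |f' t|⁻¹ := by
      simp [hu_def, map_mul, abs_inv]
    rw [this, one_div]
    exact inv_anti₀ hlam (h1 t ht)
  have hnorm_uv : ∀ t ∈ Icc a b, ‖u t * v t‖ ≤ 1 / lam := by
    intro t ht
    rw [norm_mul, osc_integrand_norm, mul_one]
    exact hnorm_u t ht
  -- bound for the integral of ‖u' x * v x‖
  have hnorm_u'v : ∀ x, ‖u' x * v x‖ = |f'' x| / (f' x) ^ 2 := by
    intro x
    simp only [hu'_def, hv_def]
    rw [norm_mul, osc_integrand_norm, mul_one, norm_mul]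
    simp only [Complex.norm_I, Complex.norm_real, Real.norm_eq_abs, one_mul]
    rw [abs_div, abs_pow, sq_abs]
  set W : ℝ → ℝ := fun t => -(f' t)⁻¹ with hW_def
  set W' : ℝ → ℝ := fun t => f'' t / (f' t) ^ 2 with hW'_def
  have hW : ∀ x ∈ Set.uIcc a b, HasDerivAt W (W' x) x := by
    intro x hx
    have := ((hd2 x).inv (by exact hne x (huIcc ▸ hx))).neg
    exact this.congr_deriv (by simp only [hW'_def]; ring)
  have hW'cont : ContinuousOn W' (Set.uIcc a b) := by
    apply ContinuousOn.div
    · fun_prop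
    · fun_prop
    · intro x hx; exact pow_ne_zero _ (by exact hne x (huIcc ▸ hx))
  have hftc := intervalIntegral.integral_eq_sub_of_hasDerivAt hW hW'cont.intervalIntegrable
  have hWa : |W b - W a| ≤ 2 / lam := by
    have ha' : |(f' a)⁻¹| ≤ 1/lam := by
      rw [abs_inv, one_div]
      exact inv_anti₀ hlam (h1 a ⟨le_refl a, hab⟩)
    have hb' : |(f' b)⁻¹| ≤ 1/lam := by
      rw [abs_inv, one_div]
      exact inv_anti₀ hlam (h1 b ⟨hab, le_refl b⟩)
    calc |W b - W a| ≤ |W b| + |W a| := abs_sub _ _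
      _ ≤ 1/lam + 1/lam := by
          rw [hW_def]; simp only [abs_neg]
          exact add_le_add hb' ha'
      _ = 2 / lam := by ring
  have hintW' : (∫ x in a..b, |f'' x| / (f' x) ^ 2) ≤ 2 / lam := by
    rcases h2 with hpos | hneg
    · have : (∫ x in a..b, |f'' x| / (f' x) ^ 2) = ∫ x in a..b, W' x := by
        apply intervalIntegral.integral_congr
        intro x hx
        show |f'' x| / f' x ^ 2 = f'' x / f' x ^ 2
        rw [abs_of_nonneg (hpos x (huIcc ▸ hx))]
      rw [this, hftc]
      exact le_trans (le_abs_self _) hWa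
    · have : (∫ x in a..b, |f'' x| / (f' x) ^ 2) = ∫ x in a..b, -W' x := by
        apply intervalIntegral.integral_congr
        intro x hx
        show |f'' x| / f' x ^ 2 = -(f'' x / f' x ^ 2)
        rw [abs_of_nonpos (hneg x (huIcc ▸ hx))]
        ring
      rw [this, intervalIntegral.integral_neg, hftc]
      exact le_trans (neg_le_abs _) hWa
  have hcalc : ‖osc f a b‖ ≤ ‖u b * v b‖ + ‖u a * v a‖ + ‖∫ x in a..b, u' x * v x‖ := by
    rw [hstepA, hibp]
    calc ‖u b * v b - u a * v a - ∫ x in a..b, u' x * v x‖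
        ≤ ‖u b * v b - u a * v a‖ + ‖∫ x in a..b, u' x * v x‖ := norm_sub_le _ _
      _ ≤ ‖u b * v b‖ + ‖u a * v a‖ + ‖∫ x in a..b, u' x * v x‖ := by
          have := norm_sub_le (u b * v b) (u a * v a); linarith
  have hlast : ‖∫ x in a..b, u' x * v x‖ ≤ 2 / lam := by
    calc ‖∫ x in a..b, u' x * v x‖ ≤ ∫ x in a..b, ‖u' x * v x‖ :=
          intervalIntegral.norm_integral_le_integral_norm hab
      _ = ∫ x in a..b, |f'' x| / (f' x) ^ 2 := by
          apply intervalIntegral.integral_congr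
          intro x _; exact hnorm_u'v x
      _ ≤ 2 / lam := hintW'
  have hb' := hnorm_uv b ⟨hab, le_refl b⟩
  have ha' := hnorm_uv a ⟨le_refl a, hab⟩
  have h4 : (4:ℝ)/lam = 1/lam + 1/lam + 2/lam := by ring
  linarith

lemma osc_split (f : ℝ → ℝ) (hf : Continuous f) (p : ℝ) (a b : ℝ) :
    osc f a b = osc f a p + osc f p b := by
  have hi : ∀ x y : ℝ, IntervalIntegrable (fun t => Complex.exp (Complex.I * (f t : ℂ)))
      volume x y := by
    intro x y
    apply Continuous.intervalIntegrable
    exact Complex.continuous_exp.comp (continuous_const.mul (Complex.continuous_ofReal.comp hf))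
  rw [osc, osc, osc, intervalIntegral.integral_add_adjacent_intervals (hi a p) (hi p b)]

/-- splitting lemma: a strongly increasing `g` controls the interval decomposition -/
lemma split_bound (f g g' : ℝ → ℝ) (hf : Continuous f)
    (hg : ∀ t, HasDerivAt g (g' t) t)
    {a b lam δ K : ℝ} (hab : a ≤ b) (hlam : 0 < lam) (hδ : 0 < δ) (hK : 0 ≤ K)
    (hinc : ∀ t ∈ Icc a b, lam ≤ g' t)
    (hpiece : ∀ x y, a ≤ x → x ≤ y → y ≤ b →
      (∀ t ∈ Icc x y, lam * δ ≤ |g t|) → ‖osc f x y‖ ≤ K) :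
    ‖osc f a b‖ ≤ 2 * δ + 2 * K := by
  have hgc : Continuous g := continuous_iff_continuousAt.2 fun t => (hg t).continuousAt
  have hld : 0 < lam * δ := mul_pos hlam hδ
  have hmono : ∀ x y, x ∈ Icc a b → y ∈ Icc a b → x ≤ y → g x ≤ g y := by
    intro x y hx hy hxy
    have := strong_gain g g' hg hinc hx hy hxy
    nlinarith
  -- case 1 : g b ≤ -lam*δ
  rcases le_or_gt (g b) (-(lam * δ)) with hcase1 | hcase1
  · have : ∀ t ∈ Icc a b, lam * δ ≤ |g t| := by
      intro t ht
      have h1 : g t ≤ g b := hmono t b ht ⟨hab, le_refl b⟩ ht.2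
      rw [abs_of_nonpos (by linarith)]
      linarith
    calc ‖osc f a b‖ ≤ K := hpiece a b (le_refl a) hab (le_refl b) this
      _ ≤ 2 * δ + 2 * K := by linarith
  rcases le_or_gt (lam * δ) (g a) with hcase2 | hcase2
  · have : ∀ t ∈ Icc a b, lam * δ ≤ |g t| := by
      intro t ht
      have h1 : g a ≤ g t := hmono a t ⟨le_refl a, hab⟩ ht ht.1
      rw [abs_of_nonneg (by linarith)]
      linarith
    calc ‖osc f a b‖ ≤ K := hpiece a b (le_refl a) hab (le_refl b) this
      _ ≤ 2 * δ + 2 * K := by linarith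
  -- main case : g a < lam*δ, -(lam*δ) < g b
  -- choose p
  have hp : ∃ p ∈ Icc a b, (-(lam * δ) ≤ g p) ∧ (p = a ∨ g p = -(lam * δ)) := by
    rcases le_or_gt (-(lam * δ)) (g a) with h | h
    · exact ⟨a, ⟨le_refl a, hab⟩, h, Or.inl rfl⟩
    · have : (-(lam*δ)) ∈ Icc (g a) (g b) := ⟨le_of_lt h, le_of_lt hcase1⟩
      obtain ⟨c, hc1, hc2⟩ := intermediate_value_Icc hab hgc.continuousOn this
      exact ⟨c, hc1, le_of_eq hc2.symm, Or.inr hc2⟩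
  have hq : ∃ q ∈ Icc a b, (g q ≤ lam * δ) ∧ (q = b ∨ g q = lam * δ) := by
    rcases le_or_gt (g b) (lam * δ) with h | h
    · exact ⟨b, ⟨hab, le_refl b⟩, h, Or.inl rfl⟩
    · have : (lam*δ) ∈ Icc (g a) (g b) := ⟨le_of_lt hcase2, le_of_lt h⟩
      obtain ⟨c, hc1, hc2⟩ := intermediate_value_Icc hab hgc.continuousOn this
      exact ⟨c, hc1, le_of_eq hc2, Or.inr hc2⟩
  obtain ⟨p, hpI, hgp, hpor⟩ := hp
  obtain ⟨q, hqI, hgq, hqor⟩ := hq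
  have hpq : p ≤ q := by
    by_contra hcon
    push_neg at hcon
    rcases hpor with rfl | hpe
    · exact absurd hqI.1 (by linarith)
    · rcases hqor with rfl | hqe
      · exact absurd hpI.2 (by linarith)
      · have h2 := strong_gain g g' hg hinc hqI hpI (le_of_lt hcon)
        rw [hpe, hqe] at h2
        nlinarith
  have hleft : ‖osc f a p‖ ≤ K := by
    rcases hpor with rfl | hpe
    · have : osc f p p = 0 := by rw [osc, intervalIntegral.integral_same]
      rw [this]; simpa using hK
    · apply hpiece a p (le_refl a) hpI.1 hpI.2
      intro t ht
      have hsub : t ∈ Icc a b := ⟨ht.1, le_trans ht.2 hpI.2⟩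
      have h1 : g t ≤ g p := hmono t p hsub hpI ht.2
      rw [hpe] at h1
      rw [abs_of_nonpos (by linarith)]
      linarith
  have hright : ‖osc f q b‖ ≤ K := by
    rcases hqor with rfl | hqe
    · have : osc f q q = 0 := by rw [osc, intervalIntegral.integral_same]
      rw [this]; simpa using hK
    · apply hpiece q b hqI.1 hqI.2 (le_refl b)
      intro t ht
      have hsub : t ∈ Icc a b := ⟨le_trans hqI.1 ht.1, ht.2⟩
      have h1 : g q ≤ g t := hmono q t hqI hsub ht.1
      rw [hqe] at h1
      rw [abs_of_nonneg (by linarith)]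
      linarith
  have hmid : ‖osc f p q‖ ≤ 2 * δ := by
    have h2 := strong_gain g g' hg hinc hpI hqI hpq
    have hlen : q - p ≤ 2 * δ := by nlinarith
    exact le_trans (osc_trivial f hpq) hlen
  have hsplit : osc f a b = osc f a p + (osc f p q + osc f q b) := by
    rw [← osc_split f hf q p b, ← osc_split f hf p a b]
  calc ‖osc f a b‖ ≤ ‖osc f a p‖ + (‖osc f p q‖ + ‖osc f q b‖) := by
        rw [hsplit]
        exact le_trans (norm_add_le _ _) (by gcongr; exact norm_add_le _ _)
    _ ≤ K + (2 * δ + K) := by gcongr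
    _ = 2 * δ + 2 * K := by ring

lemma rpow_merge {lam : ℝ} (hlam : 0 < lam) (r : ℝ) :
    lam * lam ^ (r : ℝ) = lam ^ (1 + r) := by
  nth_rewrite 1 [← Real.rpow_one lam]
  rw [← Real.rpow_add hlam]

lemma vdc2_pos (f f' f'' : ℝ → ℝ)
    (hd1 : ∀ t, HasDerivAt f (f' t) t)
    (hd2 : ∀ t, HasDerivAt f' (f'' t) t)
    (hc2 : Continuous f'')
    {a b lam : ℝ} (hab : a ≤ b) (hlam : 0 < lam)
    (h2 : ∀ t ∈ Icc a b, lam ≤ f'' t) :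
    ‖osc f a b‖ ≤ 10 * lam ^ (-(1/2) : ℝ) := by
  have hcf : Continuous f := continuous_iff_continuousAt.2 fun t => (hd1 t).continuousAt
  set δ : ℝ := lam ^ (-(1/2) : ℝ) with hδ_def
  have hδ : 0 < δ := Real.rpow_pos_of_pos hlam _
  have hldeq : lam * δ = lam ^ ((1/2) : ℝ) := by
    rw [hδ_def, rpow_merge hlam]; norm_num
  have hld : 0 < lam * δ := mul_pos hlam hδ
  have hK : (0:ℝ) ≤ 4 / (lam * δ) := by positivity
  have h := split_bound f f' f'' hcf hd2 hab hlam hδ hK h2 ?piece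
  case piece =>
    intro x y hax hxy hyb hbig
    apply vdc1 f f' f'' hd1 hd2 hc2 hxy hld hbig
    left
    intro t ht
    have : t ∈ Icc a b := ⟨le_trans hax ht.1, le_trans ht.2 hyb⟩
    linarith [h2 t this, hlam.le]
  calc ‖osc f a b‖ ≤ 2 * δ + 2 * (4 / (lam * δ)) := h
    _ = 2 * δ + 8 * (lam * δ)⁻¹ := by ring
    _ = 10 * lam ^ (-(1/2) : ℝ) := by
        rw [hldeq, ← Real.rpow_neg hlam.le, hδ_def]
        norm_num
        ring

lemma vdc2 (f f' f'' : ℝ → ℝ)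
    (hd1 : ∀ t, HasDerivAt f (f' t) t)
    (hd2 : ∀ t, HasDerivAt f' (f'' t) t)
    (hc2 : Continuous f'')
    {a b lam : ℝ} (hab : a ≤ b) (hlam : 0 < lam)
    (h2 : ∀ t ∈ Icc a b, lam ≤ |f'' t|) :
    ‖osc f a b‖ ≤ 10 * lam ^ (-(1/2) : ℝ) := by
  have hne : ∀ t ∈ Icc a b, f'' t ≠ 0 := by
    intro t ht h0
    have := h2 t ht; rw [h0, abs_zero] at this; linarith
  rcases sign_dichotomy f'' hc2 hne with hpos | hneg
  · apply vdc2_pos f f' f'' hd1 hd2 hc2 hab hlam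
    intro t ht
    have := h2 t ht
    rwa [abs_of_pos (hpos t ht)] at this
  · rw [← osc_neg_norm f a b]
    apply vdc2_pos (fun t => -f t) (fun t => -f' t) (fun t => -f'' t)
      (fun t => (hd1 t).neg) (fun t => (hd2 t).neg) hc2.neg hab hlam
    intro t ht
    have := h2 t ht
    rw [abs_of_neg (hneg t ht)] at this
    simpa using this

lemma vdc3_pos (f f' f'' f''' : ℝ → ℝ)
    (hd1 : ∀ t, HasDerivAt f (f' t) t)
    (hd2 : ∀ t, HasDerivAt f' (f'' t) t)
    (hd3 : ∀ t, HasDerivAt f'' (f''' t) t)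
    (hc3 : Continuous f''')
    {a b lam : ℝ} (hab : a ≤ b) (hlam : 0 < lam)
    (h3 : ∀ t ∈ Icc a b, lam ≤ f''' t) :
    ‖osc f a b‖ ≤ 22 * lam ^ (-(1/3) : ℝ) := by
  have hcf : Continuous f := continuous_iff_continuousAt.2 fun t => (hd1 t).continuousAt
  have hc2 : Continuous f'' := continuous_iff_continuousAt.2 fun t => (hd3 t).continuousAt
  set δ : ℝ := lam ^ (-(1/3) : ℝ) with hδ_def
  have hδ : 0 < δ := Real.rpow_pos_of_pos hlam _
  have hldeq : lam * δ = lam ^ ((2/3) : ℝ) := by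
    rw [hδ_def, rpow_merge hlam]; norm_num
  have hld : 0 < lam * δ := mul_pos hlam hδ
  have hK : (0:ℝ) ≤ 10 * (lam * δ) ^ (-(1/2) : ℝ) := by positivity
  have h := split_bound f f'' f''' hcf hd3 hab hlam hδ hK h3 ?piece
  case piece =>
    intro x y hax hxy hyb hbig
    exact vdc2 f f' f'' hd1 hd2 hc2 hxy hld hbig
  calc ‖osc f a b‖ ≤ 2 * δ + 2 * (10 * (lam * δ) ^ (-(1/2) : ℝ)) := h
    _ = 2 * δ + 20 * lam ^ (((2/3) * (-(1/2))) : ℝ) := by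
        rw [hldeq, ← Real.rpow_mul hlam.le]; ring
    _ = 22 * lam ^ (-(1/3) : ℝ) := by
        have he : ((2:ℝ)/3) * (-(1/2)) = -(1/3) := by norm_num
        rw [he, hδ_def]; ring

lemma vdc3 (f f' f'' f''' : ℝ → ℝ)
    (hd1 : ∀ t, HasDerivAt f (f' t) t)
    (hd2 : ∀ t, HasDerivAt f' (f'' t) t)
    (hd3 : ∀ t, HasDerivAt f'' (f''' t) t)
    (hc3 : Continuous f''')
    {a b lam : ℝ} (hab : a ≤ b) (hlam : 0 < lam)
    (h3 : ∀ t ∈ Icc a b, lam ≤ |f''' t|) :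
    ‖osc f a b‖ ≤ 22 * lam ^ (-(1/3) : ℝ) := by
  have hne : ∀ t ∈ Icc a b, f''' t ≠ 0 := by
    intro t ht h0
    have := h3 t ht; rw [h0, abs_zero] at this; linarith
  rcases sign_dichotomy f''' hc3 hne with hpos | hneg
  · apply vdc3_pos f f' f'' f''' hd1 hd2 hd3 hc3 hab hlam
    intro t ht
    have := h3 t ht
    rwa [abs_of_pos (hpos t ht)] at this
  · rw [← osc_neg_norm f a b]
    apply vdc3_pos (fun t => -f t) (fun t => -f' t) (fun t => -f'' t) (fun t => -f''' t)
      (fun t => (hd1 t).neg) (fun t => (hd2 t).neg) (fun t => (hd3 t).neg) hc3.neg hab hlam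
    intro t ht
    have := h3 t ht
    rw [abs_of_neg (hneg t ht)] at this
    simpa using this

lemma vdc4_pos (f f' f'' f''' f'''' : ℝ → ℝ)
    (hd1 : ∀ t, HasDerivAt f (f' t) t)
    (hd2 : ∀ t, HasDerivAt f' (f'' t) t)
    (hd3 : ∀ t, HasDerivAt f'' (f''' t) t)
    (hd4 : ∀ t, HasDerivAt f''' (f'''' t) t)
    (hc4 : Continuous f'''')
    {a b lam : ℝ} (hab : a ≤ b) (hlam : 0 < lam)
    (h4 : ∀ t ∈ Icc a b, lam ≤ f'''' t) :
    ‖osc f a b‖ ≤ 46 * lam ^ (-(1/4) : ℝ) := by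
  have hcf : Continuous f := continuous_iff_continuousAt.2 fun t => (hd1 t).continuousAt
  have hc3 : Continuous f''' := continuous_iff_continuousAt.2 fun t => (hd4 t).continuousAt
  set δ : ℝ := lam ^ (-(1/4) : ℝ) with hδ_def
  have hδ : 0 < δ := Real.rpow_pos_of_pos hlam _
  have hldeq : lam * δ = lam ^ ((3/4) : ℝ) := by
    rw [hδ_def, rpow_merge hlam]; norm_num
  have hld : 0 < lam * δ := mul_pos hlam hδ
  have hK : (0:ℝ) ≤ 22 * (lam * δ) ^ (-(1/3) : ℝ) := by positivity
  have h := split_bound f f''' f'''' hcf hd4 hab hlam hδ hK h4 ?piece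
  case piece =>
    intro x y hax hxy hyb hbig
    exact vdc3 f f' f'' f''' hd1 hd2 hd3 hc3 hxy hld hbig
  calc ‖osc f a b‖ ≤ 2 * δ + 2 * (22 * (lam * δ) ^ (-(1/3) : ℝ)) := h
    _ = 2 * δ + 44 * lam ^ (((3/4) * (-(1/3))) : ℝ) := by
        rw [hldeq, ← Real.rpow_mul hlam.le]; ring
    _ = 46 * lam ^ (-(1/4) : ℝ) := by
        have he : ((3:ℝ)/4) * (-(1/3)) = -(1/4) := by norm_num
        rw [he, hδ_def]; ring

lemma vdc4 (f f' f'' f''' f'''' : ℝ → ℝ)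
    (hd1 : ∀ t, HasDerivAt f (f' t) t)
    (hd2 : ∀ t, HasDerivAt f' (f'' t) t)
    (hd3 : ∀ t, HasDerivAt f'' (f''' t) t)
    (hd4 : ∀ t, HasDerivAt f''' (f'''' t) t)
    (hc4 : Continuous f'''')
    {a b lam : ℝ} (hab : a ≤ b) (hlam : 0 < lam)
    (h4 : ∀ t ∈ Icc a b, lam ≤ |f'''' t|) :
    ‖osc f a b‖ ≤ 46 * lam ^ (-(1/4) : ℝ) := by
  have hne : ∀ t ∈ Icc a b, f'''' t ≠ 0 := by
    intro t ht h0
    have := h4 t ht; rw [h0, abs_zero] at this; linarith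
  rcases sign_dichotomy f'''' hc4 hne with hpos | hneg
  · apply vdc4_pos f f' f'' f''' f'''' hd1 hd2 hd3 hd4 hc4 hab hlam
    intro t ht
    have := h4 t ht
    rwa [abs_of_pos (hpos t ht)] at this
  · rw [← osc_neg_norm f a b]
    apply vdc4_pos (fun t => -f t) (fun t => -f' t) (fun t => -f'' t) (fun t => -f''' t)
      (fun t => -f'''' t)
      (fun t => (hd1 t).neg) (fun t => (hd2 t).neg) (fun t => (hd3 t).neg)
      (fun t => (hd4 t).neg) hc4.neg hab hlam
    intro t ht
    have := h4 t ht
    rw [abs_of_neg (hneg t ht)] at this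
    simpa using this

/-- sign constancy on a closed interval from no zeros in the open interval -/
lemma sign_const_of_no_zero (S : ℝ → ℝ) (hS : Continuous S) {x y : ℝ} (hxy : x ≤ y)
    (h : ∀ t ∈ Ioo x y, S t ≠ 0) :
    (∀ t ∈ Icc x y, 0 ≤ S t) ∨ (∀ t ∈ Icc x y, S t ≤ 0) := by
  by_contra hc
  push_neg at hc
  obtain ⟨⟨t₁, ht₁, hS₁⟩, ⟨t₂, ht₂, hS₂⟩⟩ := hc
  -- S t₁ < 0 < S t₂
  have hS₁ : S t₁ < 0 := by linarith [hS₁]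
  have hS₂ : 0 < S t₂ := by linarith [hS₂]
  rcases le_total t₁ t₂ with hle | hle
  · have h0 : (0:ℝ) ∈ Ioo (S t₁) (S t₂) := ⟨hS₁, hS₂⟩
    obtain ⟨c, hc1, hc2⟩ := intermediate_value_Ioo hle hS.continuousOn h0
    refine h c ⟨lt_of_le_of_lt ht₁.1 hc1.1, lt_of_lt_of_le hc1.2 ht₂.2⟩ hc2
  · have h0 : (0:ℝ) ∈ Ioo (S t₁) (S t₂) := ⟨hS₁, hS₂⟩
    obtain ⟨c, hc1, hc2⟩ := intermediate_value_Ioo' hle hS.continuousOn h0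
    refine h c ⟨lt_of_le_of_lt ht₂.1 hc1.1, lt_of_lt_of_le hc1.2 ht₁.2⟩ hc2

/-- partition induction: splitting the interval at points of `Z` -/
lemma partition_bound (g : ℝ → ℂ) (K : ℝ) (hK : 0 ≤ K) (Z : Finset ℝ) (a₀ b₀ : ℝ)
    (hint : ∀ x y : ℝ, IntervalIntegrable g volume x y)
    (hpiece : ∀ x y : ℝ, a₀ ≤ x → x ≤ y → y ≤ b₀ → (∀ z ∈ Z, z ∉ Ioo x y) →
      ‖∫ t in x..y, g t‖ ≤ K) :
    ∀ n : ℕ, ∀ a b : ℝ, a₀ ≤ a → a ≤ b → b ≤ b₀ →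
      (Z.filter (· ∈ Ioo a b)).card ≤ n →
      ‖∫ t in a..b, g t‖ ≤ ((Z.filter (· ∈ Ioo a b)).card + 1) * K := by
  intro n
  induction n with
  | zero =>
    intro a b ha hab hb hcard
    have hempty : ∀ z ∈ Z, z ∉ Ioo a b := by
      intro z hz hmem
      have : z ∈ Z.filter (· ∈ Ioo a b) := Finset.mem_filter.2 ⟨hz, hmem⟩
      have := Finset.card_pos.2 ⟨z, this⟩
      omega
    have hc0 : (Z.filter (· ∈ Ioo a b)).card = 0 := by omega
    rw [hc0]
    simpa using hpiece a b ha hab hb hempty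
  | succ n ih =>
    intro a b ha hab hb hcard
    by_cases hz : ∃ z ∈ Z, z ∈ Ioo a b
    · obtain ⟨z, hzZ, hzI⟩ := hz
      have hz1 : a ≤ z := le_of_lt hzI.1
      have hz2 : z ≤ b := le_of_lt hzI.2
      have hsplit : (∫ t in a..b, g t) = (∫ t in a..z, g t) + ∫ t in z..b, g t :=
        (intervalIntegral.integral_add_adjacent_intervals (hint a z) (hint z b)).symm
      set c₁ := (Z.filter (· ∈ Ioo a z)).card with hc₁
      set c₂ := (Z.filter (· ∈ Ioo z b)).card with hc₂
      have hdisj : Disjoint (Z.filter (· ∈ Ioo a z)) (Z.filter (· ∈ Ioo z b)) := by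
        rw [Finset.disjoint_left]
        intro t ht1 ht2
        have h1 := (Finset.mem_filter.1 ht1).2
        have h2 := (Finset.mem_filter.1 ht2).2
        simp only [Set.mem_Ioo] at h1 h2
        linarith [h1.2, h2.1]
      have hdisj2 : Disjoint ((Z.filter (· ∈ Ioo a z)) ∪ (Z.filter (· ∈ Ioo z b))) {z} := by
        rw [Finset.disjoint_right]
        intro t ht
        simp only [Finset.mem_singleton] at ht
        subst ht
        intro hmem
        rcases Finset.mem_union.1 hmem with h | h
        · have := (Finset.mem_filter.1 h).2
          simp only [Set.mem_Ioo] at this; linarith [this.2]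
        · have := (Finset.mem_filter.1 h).2
          simp only [Set.mem_Ioo] at this; linarith [this.1]
      have hsub : ((Z.filter (· ∈ Ioo a z)) ∪ (Z.filter (· ∈ Ioo z b))) ∪ {z}
          ⊆ Z.filter (· ∈ Ioo a b) := by
        intro t ht
        rcases Finset.mem_union.1 ht with h | h
        · rcases Finset.mem_union.1 h with h' | h'
          · have := Finset.mem_filter.1 h'
            refine Finset.mem_filter.2 ⟨this.1, ?_⟩
            have := this.2; simp only [Set.mem_Ioo] at this ⊢
            exact ⟨this.1, lt_trans this.2 hzI.2⟩
          · have := Finset.mem_filter.1 h'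
            refine Finset.mem_filter.2 ⟨this.1, ?_⟩
            have := this.2; simp only [Set.mem_Ioo] at this ⊢
            exact ⟨lt_trans hzI.1 this.1, this.2⟩
        · simp only [Finset.mem_singleton] at h
          subst h
          exact Finset.mem_filter.2 ⟨hzZ, hzI⟩
      have hcards : c₁ + c₂ + 1 ≤ (Z.filter (· ∈ Ioo a b)).card := by
        have h1 := Finset.card_le_card hsub
        rw [Finset.card_union_of_disjoint hdisj2, Finset.card_union_of_disjoint hdisj] at h1
        simp only [Finset.card_singleton] at h1
        omega
      have ih1 := ih a z ha hz1 (le_trans hz2 hb) (by omega)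
      have ih2 := ih z b (le_trans ha hz1) hz2 hb (by omega)
      rw [hsplit]
      have hcc : (c₁ : ℝ) + c₂ + 1 ≤ ((Z.filter (· ∈ Ioo a b)).card : ℝ) := by
        exact_mod_cast (by omega : c₁ + c₂ + 1 ≤ (Z.filter (· ∈ Ioo a b)).card)
      calc ‖(∫ t in a..z, g t) + ∫ t in z..b, g t‖
          ≤ ‖∫ t in a..z, g t‖ + ‖∫ t in z..b, g t‖ := norm_add_le _ _
        _ ≤ (↑c₁ + 1) * K + (↑c₂ + 1) * K := add_le_add ih1 ih2
        _ ≤ (((Z.filter (· ∈ Ioo a b)).card : ℝ) + 1) * K := by nlinarith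
    · push_neg at hz
      have := hpiece a b ha hab hb hz
      have hKn : K ≤ (((Z.filter (· ∈ Ioo a b)).card : ℝ) + 1) * K := by
        nlinarith [Nat.cast_nonneg (α := ℝ) (Z.filter (· ∈ Ioo a b)).card]
      linarith

/-- exp/cos/sin relations -/
lemma cos_exp_eq (x : ℂ) :
    Complex.cos x = (Complex.exp (x * Complex.I) + (Complex.exp (x * Complex.I))⁻¹) / 2 := by
  simp only [Complex.cos]
  rw [← Complex.exp_neg, neg_mul]

lemma sin_exp_eq (x : ℂ) :
    Complex.sin x = -Complex.I * (Complex.exp (x * Complex.I) - (Complex.exp (x * Complex.I))⁻¹) / 2 := by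
  simp only [Complex.sin]
  rw [← Complex.exp_neg, neg_mul]
  ring

/-- injectivity of the circle map on a short interval -/
lemma exp_injOn_Icc : Set.InjOn (fun θ : ℝ => Complex.exp ((θ:ℂ) * Complex.I))
    (Icc (π/4) (3*π/4)) := by
  intro x hx y hy hxy
  simp only at hxy
  rw [Complex.exp_eq_exp_iff_exists_int] at hxy
  obtain ⟨n, hn⟩ := hxy
  have him := congrArg Complex.im hn
  simp [Complex.add_im, Complex.mul_im] at him
  -- him : x = y + n * (2 * π) (in some form)
  have hn0 : n = 0 := by
    by_contra h0
    have h1 : (1:ℝ) ≤ |(n:ℝ)| := by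
      have : (1:ℤ) ≤ |n| := Int.one_le_abs h0
      calc (1:ℝ) = ((1:ℤ):ℝ) := by norm_num
        _ ≤ ((|n|:ℤ):ℝ) := by exact_mod_cast this
        _ = |(n:ℝ)| := by push_cast; ring
    have hxy1 : |x - y| ≤ π/2 := by
      rw [abs_le]
      constructor <;> [linarith [hx.1, hx.2, hy.1, hy.2]; linarith [hx.1, hx.2, hy.1, hy.2]]
    have hdiff : x - y = n * (2*π) := by linarith [him]
    have : |x - y| = |(n:ℝ)| * (2*π) := by
      rw [hdiff, abs_mul, abs_of_nonneg (by positivity : (0:ℝ) ≤ 2*π)]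
    nlinarith [pi_gt_three]
  rw [hn0] at him
  simp at him
  linarith [him]

/-- zero counting for degree-2 trig polynomials with nonzero top coefficient -/
lemma trig_zero_count (aa bb p q e : ℝ) (hpq : ¬(p = 0 ∧ q = 0)) :
    {θ : ℝ | θ ∈ Icc (π/4) (3*π/4) ∧
      aa * Real.cos θ + bb * Real.sin θ + p * Real.cos (2*θ) + q * Real.sin (2*θ) + e = 0}.Finite
    ∧ {θ : ℝ | θ ∈ Icc (π/4) (3*π/4) ∧
      aa * Real.cos θ + bb * Real.sin θ + p * Real.cos (2*θ) + q * Real.sin (2*θ) + e = 0}.ncard ≤ 4 := by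
  set S : ℝ → ℝ := fun θ =>
    aa * Real.cos θ + bb * Real.sin θ + p * Real.cos (2*θ) + q * Real.sin (2*θ) + e with hS
  set P : Polynomial ℂ :=
    C ((p - q*Complex.I)/2) * X^4 + C ((aa - bb*Complex.I)/2) * X^3 + C (e : ℂ) * X^2
      + C ((aa + bb*Complex.I)/2) * X + C ((p + q*Complex.I)/2) with hP
  set Zset : Set ℝ := {θ : ℝ | θ ∈ Icc (π/4) (3*π/4) ∧ S θ = 0} with hZ
  have hkey : ∀ θ : ℝ, (Complex.exp ((θ:ℂ) * Complex.I))^2 * ((S θ : ℝ) : ℂ)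
      = P.eval (Complex.exp ((θ:ℂ) * Complex.I)) := by
    intro θ
    set z := Complex.exp ((θ:ℂ) * Complex.I) with hz_def
    have hz : z ≠ 0 := Complex.exp_ne_zero _
    have hz2 : Complex.exp ((2*(θ:ℂ)) * Complex.I) = z^2 := by
      rw [hz_def, sq, ← Complex.exp_add]
      congr 1
      ring
    have hSc : ((S θ : ℝ) : ℂ) = (aa:ℂ) * Complex.cos (θ:ℂ) + (bb:ℂ) * Complex.sin (θ:ℂ)
        + (p:ℂ) * Complex.cos (2*(θ:ℂ)) + (q:ℂ) * Complex.sin (2*(θ:ℂ)) + (e:ℂ) := by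
      simp only [hS]
      push_cast
      ring
    rw [hSc, cos_exp_eq ((θ:ℂ)), sin_exp_eq ((θ:ℂ)), cos_exp_eq (2*(θ:ℂ)),
      sin_exp_eq (2*(θ:ℂ)), hz2, ← hz_def, hP]
    simp only [eval_add, eval_mul, eval_pow, eval_C, eval_X]
    rw [← inv_pow]
    linear_combination (((aa:ℂ) + bb*Complex.I)/2 * z
      + ((p:ℂ) + q*Complex.I)/2 * (z*z⁻¹ + 1)) * (mul_inv_cancel₀ hz)
  have hP0 : P ≠ 0 := by
    intro h0
    have hc : P.coeff 4 = (p - q*Complex.I)/2 := by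
      rw [hP]
      simp [coeff_add, coeff_C_mul, coeff_X_pow, coeff_C, coeff_X]
    rw [h0] at hc
    simp only [coeff_zero] at hc
    have : (p:ℂ) - q*Complex.I = 0 := by
      field_simp at hc
      linear_combination -hc
    rw [Complex.ext_iff] at this
    simp [Complex.sub_re, Complex.sub_im, Complex.mul_im, Complex.mul_re] at this
    exact hpq ⟨this.1, this.2⟩
  have hdeg : P.natDegree ≤ 4 := by
    rw [hP]
    compute_degree
  have hinj : Set.InjOn (fun θ : ℝ => Complex.exp ((θ:ℂ) * Complex.I)) Zset := by
    apply exp_injOn_Icc.mono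
    intro θ hθ
    exact hθ.1
  have himg : (fun θ : ℝ => Complex.exp ((θ:ℂ) * Complex.I)) '' Zset
      ⊆ (P.roots.toFinset : Set ℂ) := by
    rintro w ⟨θ, hθ, rfl⟩
    have h0 : P.eval (Complex.exp ((θ:ℂ) * Complex.I)) = 0 := by
      rw [← hkey θ, hθ.2]
      simp
    simp only [Finset.coe_sort_coe, Multiset.mem_toFinset, Finset.mem_coe]
    rw [Polynomial.mem_roots hP0]
    exact h0
  have hfin : Zset.Finite := by
    apply Set.Finite.of_finite_image _ hinj
    exact Set.Finite.subset (P.roots.toFinset.finite_toSet) himg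
  constructor
  · exact hfin
  · have h1 : Zset.ncard = ((fun θ : ℝ => Complex.exp ((θ:ℂ) * Complex.I)) '' Zset).ncard :=
      (Set.ncard_image_of_injOn hinj).symm
    rw [h1]
    calc ((fun θ : ℝ => Complex.exp ((θ:ℂ) * Complex.I)) '' Zset).ncard
        ≤ (P.roots.toFinset : Set ℂ).ncard :=
          Set.ncard_le_ncard himg (P.roots.toFinset.finite_toSet)
      _ = P.roots.toFinset.card := Set.ncard_coe_finset _
      _ ≤ Multiset.card P.roots := Multiset.toFinset_card_le _
      _ ≤ P.natDegree := Polynomial.card_roots' P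
      _ ≤ 4 := hdeg

def trig (c1 c2 c3 c4 : ℝ) : ℝ → ℝ := fun θ =>
  c1 * Real.cos θ + c2 * Real.sin θ + c3 * Real.cos (2*θ) + c4 * Real.sin (2*θ)

lemma trig_cont (c1 c2 c3 c4 : ℝ) : Continuous (trig c1 c2 c3 c4) := by
  unfold trig; fun_prop

lemma trig_deriv (c1 c2 c3 c4 : ℝ) (t : ℝ) :
    HasDerivAt (trig c1 c2 c3 c4) (trig c2 (-c1) (2*c4) (-2*c3) t) t := by
  have h2t : HasDerivAt (fun θ : ℝ => 2*θ) 2 t := by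
    simpa using (hasDerivAt_id t).const_mul 2
  have hc2 : HasDerivAt (fun θ : ℝ => Real.cos (2*θ)) (-Real.sin (2*t) * 2) t :=
    (Real.hasDerivAt_cos (2*t)).comp t h2t
  have hs2 : HasDerivAt (fun θ : ℝ => Real.sin (2*θ)) (Real.cos (2*t) * 2) t :=
    (Real.hasDerivAt_sin (2*t)).comp t h2t
  have h := (((Real.hasDerivAt_cos t).const_mul c1).add
    ((Real.hasDerivAt_sin t).const_mul c2)).add
    ((hc2.const_mul c3).add (hs2.const_mul c4))
  have hfun : trig c1 c2 c3 c4 = fun x =>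
      c1 * Real.cos x + c2 * Real.sin x + (c3 * Real.cos (2*x) + c4 * Real.sin (2*x)) := by
    funext x; unfold trig; ring
  rw [hfun]
  refine h.congr_deriv ?_
  unfold trig
  ring

lemma abs_ge_of_sq_ge {c m : ℝ} (hm : 0 ≤ m) (h : m^2 ≤ c^2) : m ≤ |c| := by
  nlinarith [abs_nonneg c, sq_abs c]

/-- wrapper for trig_zero_count with pointwise-defined S -/
lemma trig_zero_count' (S : ℝ → ℝ) (aa bb p q e : ℝ)
    (hSdef : ∀ θ, S θ = aa * Real.cos θ + bb * Real.sin θ + p * Real.cos (2*θ)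
      + q * Real.sin (2*θ) + e)
    (hpq : ¬(p = 0 ∧ q = 0)) :
    {θ : ℝ | θ ∈ Icc (π/4) (3*π/4) ∧ S θ = 0}.Finite
    ∧ {θ : ℝ | θ ∈ Icc (π/4) (3*π/4) ∧ S θ = 0}.ncard ≤ 4 := by
  have hset : {θ : ℝ | θ ∈ Icc (π/4) (3*π/4) ∧ S θ = 0}
      = {θ : ℝ | θ ∈ Icc (π/4) (3*π/4) ∧
        aa * Real.cos θ + bb * Real.sin θ + p * Real.cos (2*θ) + q * Real.sin (2*θ) + e = 0} := by
    ext θ; rw [Set.mem_setOf_eq, Set.mem_setOf_eq, hSdef θ]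
  rw [hset]
  exact trig_zero_count aa bb p q e hpq

set_option maxHeartbeats 2000000 in
lemma main_osc (u v A B : ℝ) (hM : 1 ≤ max |A| |B|) :
    ‖osc (fun θ => (-2*π) * trig u v A B θ) (π/4) (3*π/4)‖
      ≤ 1334 * (max |A| |B|) ^ (-(1/4) : ℝ) := by
  set M : ℝ := max |A| |B| with hM_def
  have hM0 : 0 < M := lt_of_lt_of_le one_pos hM
  have hAB : ¬(A = 0 ∧ B = 0) := by
    rintro ⟨rfl, rfl⟩
    simp [hM_def] at hM
    linarith
  have hab : π/4 ≤ 3*π/4 := by linarith [pi_pos]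
  have hMsq : M^2 ≤ A^2 + B^2 := by
    rcases max_cases |A| |B| with ⟨h1, _⟩ | ⟨h1, _⟩ <;> rw [hM_def, h1] <;>
      nlinarith [sq_abs A, sq_abs B, sq_nonneg A, sq_nonneg B]
  -- the phase chain
  set φ0 : ℝ → ℝ := trig u v A B with hφ0
  set φ1 : ℝ → ℝ := trig v (-u) (2*B) (-2*A) with hφ1
  set φ2 : ℝ → ℝ := trig (-u) (-v) (-4*A) (-4*B) with hφ2
  set φ3 : ℝ → ℝ := trig (-v) u (-8*B) (8*A) with hφ3
  set φ4 : ℝ → ℝ := trig u v (16*A) (16*B) with hφ4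
  have hd01 : ∀ t, HasDerivAt φ0 (φ1 t) t := fun t => trig_deriv u v A B t
  have hd12 : ∀ t, HasDerivAt φ1 (φ2 t) t := by
    intro t
    have h := trig_deriv v (-u) (2*B) (-2*A) t
    have : φ2 t = trig (-u) (-v) (2*(-2*A)) (-2*(2*B)) t := by
      simp only [hφ2]; unfold trig; ring
    rw [this]; exact h
  have hd23 : ∀ t, HasDerivAt φ2 (φ3 t) t := by
    intro t
    have h := trig_deriv (-u) (-v) (-4*A) (-4*B) t
    have : φ3 t = trig (-v) (-(-u)) (2*(-4*B)) (-2*(-4*A)) t := by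
      simp only [hφ3]; unfold trig; ring
    rw [this]; exact h
  have hd34 : ∀ t, HasDerivAt φ3 (φ4 t) t := by
    intro t
    have h := trig_deriv (-v) u (-8*B) (8*A) t
    have : φ4 t = trig u (-(-v)) (2*(8*A)) (-2*(-8*B)) t := by
      simp only [hφ4]; unfold trig; ring
    rw [this]; exact h
  -- scaled chain
  set c : ℝ := -2*π with hc_def
  set f0 : ℝ → ℝ := fun θ => c * φ0 θ with hf0
  set f1 : ℝ → ℝ := fun θ => c * φ1 θ with hf1
  set f2 : ℝ → ℝ := fun θ => c * φ2 θ with hf2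
  set f3 : ℝ → ℝ := fun θ => c * φ3 θ with hf3
  set f4 : ℝ → ℝ := fun θ => c * φ4 θ with hf4
  have hfd01 : ∀ t, HasDerivAt f0 (f1 t) t := fun t => (hd01 t).const_mul c
  have hfd12 : ∀ t, HasDerivAt f1 (f2 t) t := fun t => (hd12 t).const_mul c
  have hfd23 : ∀ t, HasDerivAt f2 (f3 t) t := fun t => (hd23 t).const_mul c
  have hfd34 : ∀ t, HasDerivAt f3 (f4 t) t := fun t => (hd34 t).const_mul c
  have hcf2 : Continuous f2 := (continuous_const.mul (trig_cont _ _ _ _))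
  have hcf3 : Continuous f3 := (continuous_const.mul (trig_cont _ _ _ _))
  have hcf4 : Continuous f4 := (continuous_const.mul (trig_cont _ _ _ _))
  have hcf0 : Continuous f0 := (continuous_const.mul (trig_cont _ _ _ _))
  -- |c| ≥ 1 amplification
  have habs_c : ∀ x : ℝ, |x| ≤ |c * x| := by
    intro x
    rw [abs_mul]
    nlinarith [abs_nonneg x, abs_of_neg (show c < 0 by rw [hc_def]; nlinarith [pi_pos]),
      pi_gt_three]
  -- h functions
  set hf : ℝ → ℝ := fun θ => A * Real.cos (2*θ) + B * Real.sin (2*θ) with hhf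
  set hd : ℝ → ℝ := fun θ => -2*A*Real.sin (2*θ) + 2*B*Real.cos (2*θ) with hhd
  have pyth : ∀ t, hf t^2 + hd t^2/4 = A^2 + B^2 := by
    intro t
    simp only [hhf, hhd]
    linear_combination (A^2 + B^2) * (Real.sin_sq_add_cos_sq (2*t))
  -- the seven sign functions and their zero sets
  set S1 : ℝ → ℝ := fun θ => hf θ - hd θ/2 with hS1
  set S2 : ℝ → ℝ := fun θ => hf θ + hd θ/2 with hS2
  set S3 : ℝ → ℝ := fun θ => φ2 θ - 4*M with hS3
  set S4 : ℝ → ℝ := fun θ => φ2 θ + 4*M with hS4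
  set S5 : ℝ → ℝ := fun θ => φ3 θ - 2*M with hS5
  set S6 : ℝ → ℝ := fun θ => φ3 θ + 2*M with hS6
  set S7 : ℝ → ℝ := fun θ => φ2 θ with hS7
  have hz1 := trig_zero_count' S1 0 0 (A - B) (A + B) 0
    (by intro θ; simp only [hS1, hhf, hhd]; ring)
    (by rintro ⟨h1, h2⟩; exact hAB ⟨by linarith, by linarith⟩)
  have hz2 := trig_zero_count' S2 0 0 (A + B) (B - A) 0
    (by intro θ; simp only [hS2, hhf, hhd]; ring)
    (by rintro ⟨h1, h2⟩; exact hAB ⟨by linarith, by linarith⟩)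
  have hz3 := trig_zero_count' S3 (-u) (-v) (-4*A) (-4*B) (-(4*M))
    (by intro θ; simp only [hS3, hφ2]; unfold trig; ring)
    (by rintro ⟨h1, h2⟩; exact hAB ⟨by linarith, by linarith⟩)
  have hz4 := trig_zero_count' S4 (-u) (-v) (-4*A) (-4*B) (4*M)
    (by intro θ; simp only [hS4, hφ2]; unfold trig; ring)
    (by rintro ⟨h1, h2⟩; exact hAB ⟨by linarith, by linarith⟩)
  have hz5 := trig_zero_count' S5 (-v) u (-8*B) (8*A) (-(2*M))
    (by intro θ; simp only [hS5, hφ3]; unfold trig; ring)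
    (by rintro ⟨h1, h2⟩; exact hAB ⟨by linarith, by linarith⟩)
  have hz6 := trig_zero_count' S6 (-v) u (-8*B) (8*A) (2*M)
    (by intro θ; simp only [hS6, hφ3]; unfold trig; ring)
    (by rintro ⟨h1, h2⟩; exact hAB ⟨by linarith, by linarith⟩)
  have hz7 := trig_zero_count' S7 (-u) (-v) (-4*A) (-4*B) 0
    (by intro θ; simp only [hS7, hφ2]; unfold trig; ring)
    (by rintro ⟨h1, h2⟩; exact hAB ⟨by linarith, by linarith⟩)
  set Z : Finset ℝ := hz1.1.toFinset ∪ hz2.1.toFinset ∪ hz3.1.toFinset ∪ hz4.1.toFinset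
    ∪ hz5.1.toFinset ∪ hz6.1.toFinset ∪ hz7.1.toFinset with hZ_def
  have hZcard : Z.card ≤ 28 := by
    have e1 : hz1.1.toFinset.card ≤ 4 := by
      rw [← Set.ncard_eq_toFinset_card _ hz1.1]; exact hz1.2
    have e2 : hz2.1.toFinset.card ≤ 4 := by
      rw [← Set.ncard_eq_toFinset_card _ hz2.1]; exact hz2.2
    have e3 : hz3.1.toFinset.card ≤ 4 := by
      rw [← Set.ncard_eq_toFinset_card _ hz3.1]; exact hz3.2
    have e4 : hz4.1.toFinset.card ≤ 4 := by
      rw [← Set.ncard_eq_toFinset_card _ hz4.1]; exact hz4.2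
    have e5 : hz5.1.toFinset.card ≤ 4 := by
      rw [← Set.ncard_eq_toFinset_card _ hz5.1]; exact hz5.2
    have e6 : hz6.1.toFinset.card ≤ 4 := by
      rw [← Set.ncard_eq_toFinset_card _ hz6.1]; exact hz6.2
    have e7 : hz7.1.toFinset.card ≤ 4 := by
      rw [← Set.ncard_eq_toFinset_card _ hz7.1]; exact hz7.2
    calc Z.card ≤ (hz1.1.toFinset ∪ hz2.1.toFinset ∪ hz3.1.toFinset ∪ hz4.1.toFinset
        ∪ hz5.1.toFinset ∪ hz6.1.toFinset).card + hz7.1.toFinset.card := Finset.card_union_le _ _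
      _ ≤ (hz1.1.toFinset ∪ hz2.1.toFinset ∪ hz3.1.toFinset ∪ hz4.1.toFinset
        ∪ hz5.1.toFinset).card + hz6.1.toFinset.card + hz7.1.toFinset.card := by
          linarith [Finset.card_union_le (hz1.1.toFinset ∪ hz2.1.toFinset ∪ hz3.1.toFinset
            ∪ hz4.1.toFinset ∪ hz5.1.toFinset) hz6.1.toFinset]
      _ ≤ (hz1.1.toFinset ∪ hz2.1.toFinset ∪ hz3.1.toFinset ∪ hz4.1.toFinset).card
          + hz5.1.toFinset.card + hz6.1.toFinset.card + hz7.1.toFinset.card := by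
          linarith [Finset.card_union_le (hz1.1.toFinset ∪ hz2.1.toFinset ∪ hz3.1.toFinset
            ∪ hz4.1.toFinset) hz5.1.toFinset]
      _ ≤ (hz1.1.toFinset ∪ hz2.1.toFinset ∪ hz3.1.toFinset).card + hz4.1.toFinset.card
          + hz5.1.toFinset.card + hz6.1.toFinset.card + hz7.1.toFinset.card := by
          linarith [Finset.card_union_le (hz1.1.toFinset ∪ hz2.1.toFinset ∪ hz3.1.toFinset)
            hz4.1.toFinset]
      _ ≤ (hz1.1.toFinset ∪ hz2.1.toFinset).card + hz3.1.toFinset.card + hz4.1.toFinset.card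
          + hz5.1.toFinset.card + hz6.1.toFinset.card + hz7.1.toFinset.card := by
          linarith [Finset.card_union_le (hz1.1.toFinset ∪ hz2.1.toFinset) hz3.1.toFinset]
      _ ≤ hz1.1.toFinset.card + hz2.1.toFinset.card + hz3.1.toFinset.card + hz4.1.toFinset.card
          + hz5.1.toFinset.card + hz6.1.toFinset.card + hz7.1.toFinset.card := by
          linarith [Finset.card_union_le hz1.1.toFinset hz2.1.toFinset]
      _ ≤ 28 := by omega
  -- the piece constant
  set K : ℝ := 46 * M ^ (-(1/4) : ℝ) with hK_def
  have hKpos : 0 < K := by positivity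
  have hrpow_le : ∀ r : ℝ, r ≤ -(1/4) → M ^ r ≤ M ^ (-(1/4) : ℝ) := by
    intro r hr
    exact Real.rpow_le_rpow_of_exponent_le hM hr
  have hrpow4 : 0 ≤ M ^ (-(1/4) : ℝ) := Real.rpow_nonneg hM0.le _
  clear_value M φ0 φ1 φ2 φ3 φ4 c f0 f1 f2 f3 f4 hf hd S1 S2 S3 S4 S5 S6 S7 K
  have hint : ∀ x y : ℝ,
      IntervalIntegrable (fun t => Complex.exp (Complex.I * (f0 t : ℂ))) volume x y := by
    intro x y
    apply Continuous.intervalIntegrable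
    exact Complex.continuous_exp.comp (continuous_const.mul (Complex.continuous_ofReal.comp hcf0))
  have hpiece : ∀ x y : ℝ, π/4 ≤ x → x ≤ y → y ≤ 3*π/4 → (∀ z ∈ Z, z ∉ Ioo x y) →
      ‖∫ t in x..y, Complex.exp (Complex.I * (f0 t : ℂ))‖ ≤ K := by
    intro x y hx hxy hy hnoz
    show ‖osc f0 x y‖ ≤ K
    have hIoo_sub : Ioo x y ⊆ Icc (π/4) (3*π/4) := fun t ht =>
      ⟨le_trans hx (le_of_lt ht.1), le_trans (le_of_lt ht.2) hy⟩
    have hnozero : ∀ (S : ℝ → ℝ)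
        (hfin : {θ : ℝ | θ ∈ Icc (π/4) (3*π/4) ∧ S θ = 0}.Finite),
        hfin.toFinset ⊆ Z → ∀ t ∈ Ioo x y, S t ≠ 0 := by
      intro S hfin hsubZ t ht h0
      have : t ∈ hfin.toFinset := (Set.Finite.mem_toFinset hfin).2 ⟨hIoo_sub ht, h0⟩
      exact hnoz t (hsubZ this) ht
    have hsubZ1 : hz1.1.toFinset ⊆ Z := (((((Finset.subset_union_left.trans Finset.subset_union_left).trans Finset.subset_union_left).trans Finset.subset_union_left).trans Finset.subset_union_left).trans Finset.subset_union_left)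
    have hsubZ2 : hz2.1.toFinset ⊆ Z := (((((Finset.subset_union_right.trans Finset.subset_union_left).trans Finset.subset_union_left).trans Finset.subset_union_left).trans Finset.subset_union_left).trans Finset.subset_union_left)
    have hsubZ3 : hz3.1.toFinset ⊆ Z := ((((Finset.subset_union_right.trans Finset.subset_union_left).trans Finset.subset_union_left).trans Finset.subset_union_left).trans Finset.subset_union_left)
    have hsubZ4 : hz4.1.toFinset ⊆ Z := (((Finset.subset_union_right.trans Finset.subset_union_left).trans Finset.subset_union_left).trans Finset.subset_union_left)
    have hsubZ5 : hz5.1.toFinset ⊆ Z := ((Finset.subset_union_right.trans Finset.subset_union_left).trans Finset.subset_union_left)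
    have hsubZ6 : hz6.1.toFinset ⊆ Z := (Finset.subset_union_right.trans Finset.subset_union_left)
    have hsubZ7 : hz7.1.toFinset ⊆ Z := Finset.subset_union_right
    have hcS1 : Continuous S1 := by
      simp only [hS1, hhf, hhd]; fun_prop
    have hcS2 : Continuous S2 := by
      simp only [hS2, hhf, hhd]; fun_prop
    have hcS3 : Continuous S3 := by
      simp only [hS3, hφ2]; exact (trig_cont _ _ _ _).sub continuous_const
    have hcS4 : Continuous S4 := by
      simp only [hS4, hφ2]; exact (trig_cont _ _ _ _).add continuous_const
    have hcS5 : Continuous S5 := by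
      simp only [hS5, hφ3]; exact (trig_cont _ _ _ _).sub continuous_const
    have hcS6 : Continuous S6 := by
      simp only [hS6, hφ3]; exact (trig_cont _ _ _ _).add continuous_const
    have hcS7 : Continuous S7 := by
      simp only [hS7, hφ2]; exact trig_cont _ _ _ _
    have sgn1 := sign_const_of_no_zero S1 hcS1 hxy (hnozero S1 hz1.1 hsubZ1)
    have sgn2 := sign_const_of_no_zero S2 hcS2 hxy (hnozero S2 hz2.1 hsubZ2)
    have sgn3 := sign_const_of_no_zero S3 hcS3 hxy (hnozero S3 hz3.1 hsubZ3)
    have sgn4 := sign_const_of_no_zero S4 hcS4 hxy (hnozero S4 hz4.1 hsubZ4)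
    have sgn5 := sign_const_of_no_zero S5 hcS5 hxy (hnozero S5 hz5.1 hsubZ5)
    have sgn6 := sign_const_of_no_zero S6 hcS6 hxy (hnozero S6 hz6.1 hsubZ6)
    have sgn7 := sign_const_of_no_zero S7 hcS7 hxy (hnozero S7 hz7.1 hsubZ7)
    -- the four case bounds
    have bound2 : (∀ t ∈ Icc x y, 4*M ≤ |φ2 t|) → ‖osc f0 x y‖ ≤ K := by
      intro hbig
      have h2' : ∀ t ∈ Icc x y, M ≤ |f2 t| := by
        intro t ht
        calc M ≤ 4*M := by linarith
          _ ≤ |φ2 t| := hbig t ht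
          _ ≤ |c * φ2 t| := habs_c _
          _ = |f2 t| := by rw [hf2]
      have h := vdc2 f0 f1 f2 hfd01 hfd12 hcf2 hxy hM0 h2'
      calc ‖osc f0 x y‖ ≤ 10 * M ^ (-(1/2) : ℝ) := h
        _ ≤ K := by
            rw [hK_def]
            have := hrpow_le (-(1/2)) (by norm_num)
            nlinarith
    have bound3 : (∀ t ∈ Icc x y, 2*M ≤ |φ3 t|) → ‖osc f0 x y‖ ≤ K := by
      intro hbig
      have h3' : ∀ t ∈ Icc x y, M ≤ |f3 t| := by
        intro t ht
        calc M ≤ 2*M := by linarith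
          _ ≤ |φ3 t| := hbig t ht
          _ ≤ |c * φ3 t| := habs_c _
          _ = |f3 t| := by rw [hf3]
      have h := vdc3 f0 f1 f2 f3 hfd01 hfd12 hfd23 hcf3 hxy hM0 h3'
      calc ‖osc f0 x y‖ ≤ 22 * M ^ (-(1/3) : ℝ) := h
        _ ≤ K := by
            rw [hK_def]
            have := hrpow_le (-(1/3)) (by norm_num)
            nlinarith
    have bound4 : (∀ t ∈ Icc x y, 4*M ≤ |φ4 t|) → ‖osc f0 x y‖ ≤ K := by
      intro hbig
      have h4' : ∀ t ∈ Icc x y, M ≤ |f4 t| := by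
        intro t ht
        calc M ≤ 4*M := by linarith
          _ ≤ |φ4 t| := hbig t ht
          _ ≤ |c * φ4 t| := habs_c _
          _ = |f4 t| := by rw [hf4]
      have h := vdc4 f0 f1 f2 f3 f4 hfd01 hfd12 hfd23 hfd34 hcf4 hxy hM0 h4'
      calc ‖osc f0 x y‖ ≤ 46 * M ^ (-(1/4) : ℝ) := h
        _ ≤ K := by rw [hK_def]
    have bound1 : (∀ t ∈ Icc x y, 2*M ≤ |φ1 t|) → ‖osc f0 x y‖ ≤ K := by
      intro hbig
      have h1' : ∀ t ∈ Icc x y, M ≤ |f1 t| := by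
        intro t ht
        calc M ≤ 2*M := by linarith
          _ ≤ |φ1 t| := hbig t ht
          _ ≤ |c * φ1 t| := habs_c _
          _ = |f1 t| := by rw [hf1]
      have hcneg : c < 0 := by rw [hc_def]; nlinarith [pi_pos]
      have hsgn2 : (∀ t ∈ Icc x y, 0 ≤ f2 t) ∨ (∀ t ∈ Icc x y, f2 t ≤ 0) := by
        rcases sgn7 with hp | hn
        · right
          intro t ht
          have := hp t ht
          simp only [hS7] at this
          simp only [hf2]
          nlinarith
        · left
          intro t ht
          have := hn t ht
          simp only [hS7] at this
          simp only [hf2]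
          nlinarith
      have h := vdc1 f0 f1 f2 hfd01 hfd12 hcf2 hxy hM0 h1' hsgn2
      calc ‖osc f0 x y‖ ≤ 4 / M := h
        _ ≤ K := by
            rw [hK_def]
            have h1 : M ^ (-(1:ℝ)) ≤ M ^ (-(1/4) : ℝ) := hrpow_le (-(1:ℝ)) (by norm_num)
            rw [Real.rpow_neg_one] at h1
            have h2 : 4 / M = 4 * M⁻¹ := by ring
            nlinarith [inv_nonneg.2 hM0.le]
    -- case analysis on the geometry
    have same_sign : (∀ t ∈ Icc x y, 0 ≤ S1 t * S2 t) → ‖osc f0 x y‖ ≤ K := by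
      intro hprod
      have hh2 : ∀ t ∈ Icc x y, M^2/2 ≤ hf t^2 := by
        intro t ht
        have hp := hprod t ht
        have hiden : S1 t * S2 t = hf t^2 - hd t^2/4 := by
          simp only [hS1, hS2]; ring
        nlinarith [pyth t, hMsq]
      rcases sgn3 with s3p | s3n
      · apply bound2
        intro t ht
        have := s3p t ht
        simp only [hS3] at this
        calc 4*M ≤ φ2 t := by linarith
          _ ≤ |φ2 t| := le_abs_self _
      · rcases sgn4 with s4p | s4n
        · -- |φ2| ≤ 4M on the piece; use the fourth derivative
          apply bound4
          intro t ht
          have h3 := s3n t ht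
          have h4 := s4p t ht
          simp only [hS3] at h3
          simp only [hS4] at h4
          have habs2 : |φ2 t| ≤ 4*M := abs_le.2 ⟨by linarith, by linarith⟩
          have h12 : 8*M ≤ |12 * hf t| := by
            apply abs_ge_of_sq_ge (by positivity)
            nlinarith [hh2 t ht]
          have hiden : φ4 t = 12 * hf t - φ2 t := by
            simp only [hφ4, hφ2, hhf]; unfold trig; ring
          calc 4*M = 8*M - 4*M := by ring
            _ ≤ |12 * hf t| - |φ2 t| := by linarith
            _ ≤ |12 * hf t - φ2 t| := abs_sub_abs_le_abs_sub _ _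
            _ = |φ4 t| := by rw [hiden]
        · apply bound2
          intro t ht
          have := s4n t ht
          simp only [hS4] at this
          calc 4*M ≤ -(φ2 t) := by linarith
            _ ≤ |φ2 t| := neg_le_abs _
    have opp_sign : (∀ t ∈ Icc x y, S1 t * S2 t ≤ 0) → ‖osc f0 x y‖ ≤ K := by
      intro hprod
      have hh2' : ∀ t ∈ Icc x y, 2*M^2 ≤ hd t^2 := by
        intro t ht
        have hp := hprod t ht
        have hiden : S1 t * S2 t = hf t^2 - hd t^2/4 := by
          simp only [hS1, hS2]; ring
        nlinarith [pyth t, hMsq, sq_nonneg (hf t)]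
      rcases sgn5 with s5p | s5n
      · apply bound3
        intro t ht
        have := s5p t ht
        simp only [hS5] at this
        calc 2*M ≤ φ3 t := by linarith
          _ ≤ |φ3 t| := le_abs_self _
      · rcases sgn6 with s6p | s6n
        · -- |φ3| ≤ 2M; use the first derivative
          apply bound1
          intro t ht
          have h5 := s5n t ht
          have h6 := s6p t ht
          simp only [hS5] at h5
          simp only [hS6] at h6
          have habs3 : |φ3 t| ≤ 2*M := abs_le.2 ⟨by linarith, by linarith⟩
          have h3d : 4*M ≤ |(-3) * hd t| := by
            apply abs_ge_of_sq_ge (by positivity)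
            nlinarith [hh2' t ht]
          have hiden : φ1 t = (-3) * hd t - φ3 t := by
            simp only [hφ1, hφ3, hhd]; unfold trig; ring
          calc 2*M = 4*M - 2*M := by ring
            _ ≤ |(-3) * hd t| - |φ3 t| := by linarith
            _ ≤ |(-3) * hd t - φ3 t| := abs_sub_abs_le_abs_sub _ _
            _ = |φ1 t| := by rw [hiden]
        · apply bound3
          intro t ht
          have := s6n t ht
          simp only [hS6] at this
          calc 2*M ≤ -(φ3 t) := by linarith
            _ ≤ |φ3 t| := neg_le_abs _
    rcases sgn1 with s1p | s1n <;> rcases sgn2 with s2p | s2n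
    · exact same_sign (fun t ht => mul_nonneg (s1p t ht) (s2p t ht))
    · exact opp_sign (fun t ht => mul_nonpos_of_nonneg_of_nonpos (s1p t ht) (s2n t ht))
    · exact opp_sign (fun t ht => mul_nonpos_of_nonpos_of_nonneg (s1n t ht) (s2p t ht))
    · exact same_sign (fun t ht => by nlinarith [s1n t ht, s2n t ht])
  have hmain := partition_bound (fun t => Complex.exp (Complex.I * (f0 t : ℂ))) K hKpos.le Z
    (π/4) (3*π/4) hint hpiece Z.card (π/4) (3*π/4) le_rfl hab le_rfl
    (Finset.card_filter_le _ _)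
  have hfc : ((Z.filter (· ∈ Ioo (π/4) (3*π/4))).card : ℝ) + 1 ≤ 29 := by
    have h1 : (Z.filter (· ∈ Ioo (π/4) (3*π/4))).card ≤ 28 :=
      le_trans (Finset.card_filter_le _ _) hZcard
    have : ((Z.filter (· ∈ Ioo (π/4) (3*π/4))).card : ℝ) ≤ 28 := by exact_mod_cast h1
    linarith
  calc ‖osc f0 (π/4) (3*π/4)‖
      = ‖∫ t in (π/4)..(3*π/4), Complex.exp (Complex.I * (f0 t : ℂ))‖ := rfl
    _ ≤ ((Z.filter (· ∈ Ioo (π/4) (3*π/4))).card + 1) * K := hmain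
    _ ≤ 29 * K := by nlinarith
    _ = 1334 * M ^ (-(1/4) : ℝ) := by rw [hK_def]; ring

lemma ennreal_rpow_anti {x y : ℝ≥0∞} (h : x ≤ y) : y ^ (-(1/4) : ℝ) ≤ x ^ (-(1/4) : ℝ) := by
  rw [ENNReal.rpow_neg, ENNReal.rpow_neg]
  exact ENNReal.inv_le_inv.2 (ENNReal.rpow_le_rpow h (by norm_num))

/-- Fourier decay for the elliptic-arc measure; the bound is the minimum
of `|(b2^{2k₁}-d2^{2k₂})ξ₃|^{-1/4}` and `|e2^{k₁+k₂}ξ₃|^{-1/4}`, read in `ℝ≥0∞` so that a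
vanishing base gives `+∞`. -/
theorem stmt17 :
    ∃ C : ℝ, 0 < C ∧ ∀ (b d e : ℝ) (k₁ k₂ : ℤ) (ξ₁ ξ₂ ξ₃ : ℝ),
      (‖∫ θ in (π/4)..(3*π/4),
          expi (-((2:ℝ)^k₁ * ξ₁ * Real.cos θ + (2:ℝ)^k₂ * ξ₂ * Real.sin θ
            + ((b * (2:ℝ)^(2*k₁) - d * (2:ℝ)^(2*k₂)) * Real.cos (2*θ)
              + e * (2:ℝ)^(k₁+k₂) * Real.sin (2*θ)) * ξ₃))‖₊ : ℝ≥0∞)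
        ≤ ENNReal.ofReal C *
          min ((ENNReal.ofReal |(b * (2:ℝ)^(2*k₁) - d * (2:ℝ)^(2*k₂)) * ξ₃|) ^ (-(1/4 : ℝ)))
              ((ENNReal.ofReal |e * (2:ℝ)^(k₁+k₂) * ξ₃|) ^ (-(1/4 : ℝ))) := by
  refine ⟨1340, by norm_num, ?_⟩
  intro b d e k₁ k₂ ξ₁ ξ₂ ξ₃
  set A : ℝ := (b * (2:ℝ)^(2*k₁) - d * (2:ℝ)^(2*k₂)) * ξ₃ with hA
  set B : ℝ := e * (2:ℝ)^(k₁+k₂) * ξ₃ with hB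
  set u : ℝ := (2:ℝ)^k₁ * ξ₁ with hu
  set v : ℝ := (2:ℝ)^k₂ * ξ₂ with hv
  have heq : (∫ θ in (π/4)..(3*π/4),
      expi (-((2:ℝ)^k₁ * ξ₁ * Real.cos θ + (2:ℝ)^k₂ * ξ₂ * Real.sin θ
        + ((b * (2:ℝ)^(2*k₁) - d * (2:ℝ)^(2*k₂)) * Real.cos (2*θ)
          + e * (2:ℝ)^(k₁+k₂) * Real.sin (2*θ)) * ξ₃)))
      = osc (fun θ => (-2*π) * trig u v A B θ) (π/4) (3*π/4) := by
    rw [osc]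
    apply intervalIntegral.integral_congr
    intro θ _
    show expi _ = _
    rw [expi]
    congr 1
    rw [hA, hB, hu, hv]
    unfold trig
    push_cast
    ring
  rw [← ENNReal.ofReal_coe_nnreal, coe_nnnorm, heq]
  set I : ℂ := osc (fun θ => (-2*π) * trig u v A B θ) (π/4) (3*π/4) with hI
  have hab : π/4 ≤ 3*π/4 := by linarith [pi_pos]
  have htriv : ‖I‖ ≤ 2 := by
    have h := osc_trivial (fun θ => (-2*π) * trig u v A B θ) hab
    have : (3*π/4 : ℝ) - π/4 = π/2 := by ring
    rw [this] at h
    have := Real.pi_le_four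
    rw [hI]
    linarith
  set M : ℝ := max |A| |B| with hM
  rcases le_or_gt M 1 with hM1 | hM1
  · -- both coefficients small: trivial bound suffices
    have h1 : (1 : ℝ≥0∞) ≤ (ENNReal.ofReal |A|) ^ (-(1/4) : ℝ) := by
      have hle : ENNReal.ofReal |A| ≤ 1 := by
        rw [show (1:ℝ≥0∞) = ENNReal.ofReal 1 by simp]
        exact ENNReal.ofReal_le_ofReal (le_trans (le_max_left _ _) hM1)
      calc (1:ℝ≥0∞) = (1:ℝ≥0∞) ^ (-(1/4):ℝ) := by rw [ENNReal.one_rpow]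
        _ ≤ (ENNReal.ofReal |A|) ^ (-(1/4):ℝ) := ennreal_rpow_anti hle
    have h2 : (1 : ℝ≥0∞) ≤ (ENNReal.ofReal |B|) ^ (-(1/4) : ℝ) := by
      have hle : ENNReal.ofReal |B| ≤ 1 := by
        rw [show (1:ℝ≥0∞) = ENNReal.ofReal 1 by simp]
        exact ENNReal.ofReal_le_ofReal (le_trans (le_max_right _ _) hM1)
      calc (1:ℝ≥0∞) = (1:ℝ≥0∞) ^ (-(1/4):ℝ) := by rw [ENNReal.one_rpow]
        _ ≤ (ENNReal.ofReal |B|) ^ (-(1/4):ℝ) := ennreal_rpow_anti hle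
    calc ENNReal.ofReal ‖I‖ ≤ ENNReal.ofReal 1340 := ENNReal.ofReal_le_ofReal (by linarith)
      _ = ENNReal.ofReal 1340 * 1 := by rw [mul_one]
      _ ≤ ENNReal.ofReal 1340 * min ((ENNReal.ofReal |A|) ^ (-(1/4):ℝ))
          ((ENNReal.ofReal |B|) ^ (-(1/4):ℝ)) := by
          exact mul_le_mul_right (le_min h1 h2) _
  · -- main case
    have hMge : 1 ≤ M := le_of_lt hM1
    have hM0 : (0:ℝ) < M := lt_trans one_pos hM1
    have hmain := main_osc u v A B hMge
    rw [← hI, ← hM] at hmain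
    have hmin : (ENNReal.ofReal M) ^ (-(1/4):ℝ)
        ≤ min ((ENNReal.ofReal |A|) ^ (-(1/4):ℝ)) ((ENNReal.ofReal |B|) ^ (-(1/4):ℝ)) := by
      apply le_min
      · exact ennreal_rpow_anti (ENNReal.ofReal_le_ofReal (le_max_left _ _))
      · exact ennreal_rpow_anti (ENNReal.ofReal_le_ofReal (le_max_right _ _))
    calc ENNReal.ofReal ‖I‖ ≤ ENNReal.ofReal (1334 * M ^ (-(1/4):ℝ)) :=
          ENNReal.ofReal_le_ofReal hmain
      _ = ENNReal.ofReal 1334 * ENNReal.ofReal (M ^ (-(1/4):ℝ)) := by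
          rw [ENNReal.ofReal_mul (by norm_num)]
      _ = ENNReal.ofReal 1334 * (ENNReal.ofReal M) ^ (-(1/4):ℝ) := by
          rw [ENNReal.ofReal_rpow_of_pos hM0]
      _ ≤ ENNReal.ofReal 1340 * min ((ENNReal.ofReal |A|) ^ (-(1/4):ℝ))
          ((ENNReal.ofReal |B|) ^ (-(1/4):ℝ)) :=
          mul_le_mul' (ENNReal.ofReal_le_ofReal (by norm_num)) hmin
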